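/- arXiv:2003.03805 — 2 statements merged into one kernel-verified Lean document; each statement's English description precedes it below -/
import Mathlib

section
/- In R = MvPowerSeries (Fin m) ℚ one has the identity Td · (Σ_{r=1}^m (−1)^r · r · ch_r) = − Σ_{j=1}^m (∏_{k ≠ j} X_k) · h(X_j). -/
open Finset

noncomputable section

/-- The element of `MvPowerSeries (Fin m) ℚ` obtained by substituting the variable `X j`
into a one-variable formal power series `f`. -/
def substAt {m : ℕ} (j : Fin m) (f : PowerSeries ℚ) : MvPowerSeries (Fin m) ℚ :=
  fun n => if n.support ⊆ {j} then PowerSeries.coeff (n j) f else 0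

/-- The one-variable power series `exp (−X) = Σ_{n ≥ 0} (−X)^n / n!`. -/
def expNeg : PowerSeries ℚ := PowerSeries.mk fun n => (-1) ^ n / n.factorial

/-- `ch m r = Σ_{S ⊆ Fin m, |S| = r} ∏_{j ∈ S} exp (−X j)`, the `r`-th Chern character
term of the exterior powers, written in Chern roots. -/
def ch (m : ℕ) (r : ℕ) : MvPowerSeries (Fin m) ℚ :=
  ∑ S ∈ Finset.powersetCard r (Finset.univ : Finset (Fin m)),
    ∏ j ∈ S, substAt j expNeg

/-- `esymm m k = Σ_{S ⊆ Fin m, |S| = k} ∏_{j ∈ S} X j`, the `k`-th elementary symmetric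
polynomial of the variables, as a multivariate power series. -/
def esymm (m : ℕ) (k : ℕ) : MvPowerSeries (Fin m) ℚ :=
  ∑ S ∈ Finset.powersetCard k (Finset.univ : Finset (Fin m)),
    ∏ j ∈ S, MvPowerSeries.X j

/-- The Todd class `Td = ∏_{j=1}^m φ(X_j)` written in Chern roots, where `φ` is the
Todd series `X/(1 − e^{−X})`. -/
def Td (m : ℕ) (φ : PowerSeries ℚ) : MvPowerSeries (Fin m) ℚ :=
  ∏ j : Fin m, substAt j φ

/-- `Td′ = Σ_{j=1}^m φ′(X_j) · ∏_{k ≠ j} φ(X_k)`, the class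
`Td′(A) = ∂/∂t Td(A + t·Id)|_{t=0}` written in Chern roots. -/
def Td' (m : ℕ) (φ : PowerSeries ℚ) : MvPowerSeries (Fin m) ℚ :=
  ∑ j : Fin m, substAt j (PowerSeries.derivative (R := ℚ) φ) *
    ∏ k ∈ Finset.univ.erase j, substAt k φ

/-- Two multivariate power series agree in total degree `≤ p`: their coefficients at every
multi-exponent of total degree `≤ p` coincide. -/
def AgreeUpTo (m p : ℕ) (F G : MvPowerSeries (Fin m) ℚ) : Prop :=
  ∀ n : Fin m →₀ ℕ, (∑ j, n j) ≤ p → MvPowerSeries.coeff n F = MvPowerSeries.coeff n G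

/-- Two multivariate power series agree in total degree `p`: their coefficients at every
multi-exponent of total degree `p` coincide. -/
def AgreeAt (m p : ℕ) (F G : MvPowerSeries (Fin m) ℚ) : Prop :=
  ∀ n : Fin m →₀ ℕ, (∑ j, n j) = p → MvPowerSeries.coeff n F = MvPowerSeries.coeff n G

/-!
With `y j = exp (-X j)`, the sum `∑ r, (-1)^r r e_r(y)` is the derivative at `t = 1` of
`∏ k, (1 - t y k)`, namely `-∑ j, y j ∏_{k ≠ j} (1 - y k)`.
Since `φ(X k) (1 - y k) = X k` and `φ(X j) y j = h(X j)`, multiplying by `Td = ∏ k, φ(X k)`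
turns the `j`-th summand into `(∏_{k ≠ j} X k) h(X j)`.
-/

namespace Finset

variable {ι R : Type*} [CommRing R]

lemma prod_one_sub_eq_sum_powerset (s : Finset ι) (y : ι → R) :
    ∏ k ∈ s, (1 - y k) = ∑ t ∈ s.powerset, (-1) ^ #t * ∏ k ∈ t, y k := by
  simp only [sub_eq_add_neg, prod_one_add, prod_neg]

variable [DecidableEq ι]

lemma sum_powerset_filter_mem {M : Type*} [AddCommMonoid M] {s : Finset ι} {j : ι} (hj : j ∈ s)
    (g : Finset ι → M) :
    ∑ t ∈ s.powerset with j ∈ t, g t = ∑ t ∈ (s.erase j).powerset, g (insert j t) := by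
  conv_lhs => rw [← insert_erase hj, sum_filter, sum_powerset_insert (notMem_erase j s)]
  rw [sum_eq_zero fun t ht => if_neg fun h => notMem_erase j s (mem_powerset.mp ht h), zero_add]
  simp only [mem_insert_self, if_true]

lemma sum_powerset_neg_one_pow_card_mul_card_mul_prod (s : Finset ι) (y : ι → R) :
    ∑ t ∈ s.powerset, (-1) ^ #t * #t * ∏ k ∈ t, y k
      = -∑ j ∈ s, y j * ∏ k ∈ s.erase j, (1 - y k) := by
  have hcount : ∀ t ∈ s.powerset, (-1 : R) ^ #t * #t * ∏ k ∈ t, y k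
      = ∑ j ∈ s, if j ∈ t then (-1) ^ #t * ∏ k ∈ t, y k else 0 := by
    intro t ht
    rw [← sum_filter, filter_mem_eq_inter, inter_eq_right.mpr (mem_powerset.mp ht), sum_const,
      nsmul_eq_mul]
    ring
  rw [sum_congr rfl hcount, sum_comm, ← sum_neg_distrib]
  refine sum_congr rfl fun j hj => ?_
  rw [← sum_filter, sum_powerset_filter_mem hj, prod_one_sub_eq_sum_powerset, mul_sum,
    ← sum_neg_distrib]
  refine sum_congr rfl fun t ht => ?_
  have hjt : j ∉ t := fun h => notMem_erase j s (mem_powerset.mp ht h)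
  rw [card_insert_of_notMem hjt, prod_insert hjt]
  ring

lemma sum_Icc_neg_one_pow_mul_mul_sum_powersetCard_prod (s : Finset ι) (y : ι → R) :
    ∑ r ∈ Icc 1 #s, (-1) ^ r * r * ∑ t ∈ powersetCard r s, ∏ k ∈ t, y k
      = -∑ j ∈ s, y j * ∏ k ∈ s.erase j, (1 - y k) := by
  rw [← sum_powerset_neg_one_pow_card_mul_card_mul_prod, sum_powerset, range_eq_Ico,
    sum_eq_sum_Ico_succ_bot (Nat.succ_pos _), Nat.succ_eq_add_one, Ico_add_one_right_eq_Icc,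
    powersetCard_zero, sum_singleton, card_empty, Nat.cast_zero, mul_zero, zero_mul, zero_add]
  refine sum_congr rfl fun r _ => ?_
  rw [mul_sum]
  refine sum_congr rfl fun t ht => ?_
  rw [(mem_powersetCard.mp ht).2]

end Finset

lemma substAt_eq_substAlgHom {m : ℕ} (j : Fin m) (f : PowerSeries ℚ) :
    substAt j f = PowerSeries.substAlgHom (PowerSeries.HasSubst.X (S := ℚ) j) f := by
  ext e
  rw [PowerSeries.coe_substAlgHom, PowerSeries.coeff_subst (PowerSeries.HasSubst.X j)]
  simp only [MvPowerSeries.coeff_X_pow, smul_eq_mul, mul_ite, mul_one, mul_zero]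
  by_cases he : e.support ⊆ {j}
  · obtain ⟨k, rfl⟩ := Finsupp.support_subset_singleton'.mp he
    rw [finsum_eq_single _ k fun d hd => if_neg ((Finsupp.single_injective j).ne (Ne.symm hd))]
    exact (if_pos he).trans (by rw [Finsupp.single_eq_same, if_pos rfl])
  · rw [finsum_eq_zero_of_forall_eq_zero fun d =>
      if_neg (by rintro rfl; exact he Finsupp.support_single_subset)]
    exact if_neg he

lemma expNeg_eq_evalNegHom_exp : expNeg = PowerSeries.evalNegHom (PowerSeries.exp ℚ) := by
  ext n
  simp [expNeg, PowerSeries.evalNegHom, PowerSeries.coeff_rescale, PowerSeries.coeff_exp,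
    div_eq_mul_inv, mul_comm]

lemma exp_mul_expNeg : PowerSeries.exp ℚ * expNeg = 1 := by
  rw [expNeg_eq_evalNegHom_exp]
  exact PowerSeries.exp_mul_exp_neg_eq_one

lemma mul_expNeg_eq_of_mul_exp_sub_one_eq_X {φ h : PowerSeries ℚ}
    (hφ : φ * (1 - expNeg) = PowerSeries.X) (hh : h * (PowerSeries.exp ℚ - 1) = PowerSeries.X) :
    φ * expNeg = h := by
  have hexp : PowerSeries.exp ℚ - 1 ≠ 0 := fun e => by
    simpa [PowerSeries.coeff_exp] using congrArg (PowerSeries.coeff 1) e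
  refine mul_right_cancel₀ hexp ?_
  calc φ * expNeg * (PowerSeries.exp ℚ - 1)
      = φ * (1 - expNeg) := by linear_combination φ * exp_mul_expNeg
    _ = h * (PowerSeries.exp ℚ - 1) := hφ.trans hh.symm

/-- `Td · (Σ_{r=1}^m (−1)^r · r · ch_r) = − Σ_{j=1}^m (∏_{k ≠ j} X_k) · h(X_j)`,
where `h = X/(e^X − 1)` is the Bernoulli generating series. -/
theorem td_mul_weighted_sum_ch_eq (m : ℕ) (φ : PowerSeries ℚ)
    (hφ : φ * (1 - expNeg) = PowerSeries.X)
    (h : PowerSeries ℚ) (hh : h * (PowerSeries.exp ℚ - 1) = PowerSeries.X) :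
    Td m φ * ∑ r ∈ Finset.Icc 1 m,
        (-1 : MvPowerSeries (Fin m) ℚ) ^ r * (r : MvPowerSeries (Fin m) ℚ) * ch m r
      = -∑ j : Fin m,
          (∏ k ∈ Finset.univ.erase j, MvPowerSeries.X k) * substAt j h := by
  set y : Fin m → MvPowerSeries (Fin m) ℚ := fun j => substAt j expNeg
  have hX : ∀ k, substAt k φ * (1 - y k) = MvPowerSeries.X k := fun k => by
    simpa only [y, substAt_eq_substAlgHom, map_mul, map_sub, map_one,
      PowerSeries.substAlgHom_X] using congrArg (substAt k) hφ
  have hh' : ∀ j, substAt j φ * y j = substAt j h := fun j => by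
    simp only [y, substAt_eq_substAlgHom, ← map_mul, mul_expNeg_eq_of_mul_exp_sub_one_eq_X hφ hh]
  have hsum := sum_Icc_neg_one_pow_mul_mul_sum_powersetCard_prod (univ : Finset (Fin m)) y
  rw [card_univ, Fintype.card_fin] at hsum
  simp only [ch]
  rw [hsum, mul_neg, mul_sum]
  refine congrArg Neg.neg (sum_congr rfl fun j _ => ?_)
  calc Td m φ * (y j * ∏ k ∈ univ.erase j, (1 - y k))
      = substAt j φ * y j * ∏ k ∈ univ.erase j, substAt k φ * (1 - y k) := by
        rw [Td, ← mul_prod_erase univ _ (mem_univ j), prod_mul_distrib]; ring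
    _ = (∏ k ∈ univ.erase j, MvPowerSeries.X k) * substAt j h := by
        rw [hh', prod_congr rfl fun k _ => hX k, mul_comm]
end
end

section
/- In R = MvPowerSeries (Fin m) ℚ one has the identity Td · (Σ_{r=2}^m (−1)^r · r(r−1) · ch_r) = Σ_{(j,k), j ≠ k} (∏_{l ∉ {j,k}} X_l) · h(X_j) · h(X_k), where the sum on the right runs over all ordered pairs of distinct indices j, k ∈ Fin m. -/
open Finset

noncomputable section

/-! Both `h` and `φ · e^{−X}` solve `g · (e^X − 1) = X`, so `h = φ · e^{−X}` and
`Td · ch_r = Σ_{|S| = r} ∏_{i ∈ S} h(X_i) ∏_{i ∉ S} φ(X_i)`. The left-hand side is therefore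
`F''(−1)` for the polynomial `F(t) = ∏_i (φ(X_i) + t h(X_i)) = Σ_S t^{|S|} ∏_S h ∏_{Sᶜ} φ`,
while differentiating the product twice gives
`F''(−1) = Σ_{j ≠ k} h(X_j) h(X_k) ∏_{l ≠ j, k} (φ(X_l) − h(X_l))`, and `φ − h = X`. -/

section SecondDerivative

open Polynomial

variable {ι R : Type*} [CommRing R] [DecidableEq ι]

lemma derivative_prod_C_add_C_mul_X (s : Finset ι) (a b : ι → R) :
    derivative (∏ i ∈ s, (C (b i) + C (a i) * X))
      = ∑ j ∈ s, (∏ i ∈ s.erase j, (C (b i) + C (a i) * X)) * C (a j) := by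
  simp [derivative_prod_finset]

lemma prod_C_add_C_mul_X_eq_sum_powerset (s : Finset ι) (a b : ι → R) :
    ∏ i ∈ s, (C (b i) + C (a i) * X)
      = ∑ S ∈ s.powerset, C ((∏ i ∈ S, a i) * ∏ i ∈ s \ S, b i) * X ^ S.card := by
  simp_rw [add_comm (C (b _)), prod_add, prod_mul_distrib, prod_const, map_mul, map_prod]
  exact sum_congr rfl fun _ _ => by ring

lemma eval_derivative_derivative_prod_C_add_C_mul_X (s : Finset ι) (a b : ι → R) (x : R) :
    eval x (derivative (derivative (∏ i ∈ s, (C (b i) + C (a i) * X))))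
      = ∑ j ∈ s, ∑ k ∈ s.erase j, (∏ l ∈ (s.erase j).erase k, (b l + a l * x)) * a j * a k := by
  simp only [derivative_prod_C_add_C_mul_X, derivative_sum, derivative_mul, derivative_C,
    mul_zero, add_zero, sum_mul, eval_finsetSum, eval_mul, eval_C, eval_prod, eval_add, eval_X]
  exact sum_congr rfl fun _ _ => sum_congr rfl fun _ _ => mul_right_comm _ _ _

lemma eval_neg_one_derivative_derivative_C_mul_X_pow (c : R) (n : ℕ) :
    eval (-1) (derivative (derivative (C c * X ^ n))) = (-1) ^ n * n * (n - 1) * c := by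
  rcases n with _ | _ | n
  · simp
  · simp
  · simp only [derivative_C_mul_X_pow, eval_mul, eval_C, eval_pow, eval_X]
    push_cast
    ring

theorem sum_Icc_neg_one_pow_mul_sum_powersetCard (s : Finset ι) (a b : ι → R) :
    ∑ r ∈ Icc 2 #s, (-1 : R) ^ r * r * (r - 1) *
        ∑ S ∈ powersetCard r s, (∏ i ∈ S, a i) * ∏ i ∈ s \ S, b i
      = ∑ j ∈ s, ∑ k ∈ s.erase j, (∏ l ∈ (s.erase j).erase k, (b l - a l)) * a j * a k := by
  have hIcc : Icc 2 #s ⊆ range (#s + 1) := fun r hr => by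
    simp only [mem_Icc, mem_range] at hr ⊢; omega
  calc _ = ∑ r ∈ range (#s + 1), (-1 : R) ^ r * r * (r - 1) *
        ∑ S ∈ powersetCard r s, (∏ i ∈ S, a i) * ∏ i ∈ s \ S, b i := by
        refine sum_subset hIcc fun r hr hr' => ?_
        obtain rfl | rfl : r = 0 ∨ r = 1 := by simp only [mem_Icc, mem_range] at hr hr'; omega
        all_goals simp
    _ = eval (-1) (derivative (derivative (∏ i ∈ s, (C (b i) + C (a i) * X)))) := by
        simp only [prod_C_add_C_mul_X_eq_sum_powerset, derivative_sum, eval_finsetSum,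
          eval_neg_one_derivative_derivative_C_mul_X_pow, sum_powerset, mul_sum]
        refine sum_congr rfl fun r _ => sum_congr rfl fun S hS => ?_
        rw [(mem_powersetCard.mp hS).2]
    _ = _ := by
        simp only [eval_derivative_derivative_prod_C_add_C_mul_X, mul_neg_one, ← sub_eq_add_neg]

end SecondDerivative

lemma substAt_eq_subst {m : ℕ} (j : Fin m) (f : PowerSeries ℚ) :
    substAt j f = f.subst (MvPowerSeries.X j) := by
  ext n
  rw [PowerSeries.coeff_subst_single]
  exact if_congr Finsupp.support_subset_singleton rfl rfl

lemma substAt_mul {m : ℕ} (j : Fin m) (f g : PowerSeries ℚ) :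
    substAt j (f * g) = substAt j f * substAt j g := by
  simp only [substAt_eq_subst, PowerSeries.subst_mul (PowerSeries.HasSubst.X j)]

lemma substAt_sub {m : ℕ} (j : Fin m) (f g : PowerSeries ℚ) :
    substAt j (f - g) = substAt j f - substAt j g := by
  simp only [substAt_eq_subst, PowerSeries.subst_sub (PowerSeries.HasSubst.X j)]

lemma substAt_X {m : ℕ} (j : Fin m) : substAt j PowerSeries.X = MvPowerSeries.X j := by
  rw [substAt_eq_subst, PowerSeries.subst_X (PowerSeries.HasSubst.X j)]

lemma eq_mul_expNeg_of_mul_exp_sub_one_eq_X {φ h : PowerSeries ℚ}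
    (hφ : φ * (1 - expNeg) = PowerSeries.X) (hh : h * (PowerSeries.exp ℚ - 1) = PowerSeries.X) :
    h = φ * expNeg := by
  have hexp : PowerSeries.exp ℚ - 1 ≠ 0 := fun h0 => by
    simpa [PowerSeries.coeff_exp] using congrArg (PowerSeries.coeff 1) h0
  refine mul_right_cancel₀ hexp ?_
  rw [hh, ← hφ]
  linear_combination -φ * exp_mul_expNeg

lemma Td_mul_ch (m r : ℕ) (φ : PowerSeries ℚ) :
    Td m φ * ch m r = ∑ S ∈ powersetCard r univ,
      (∏ i ∈ S, substAt i (φ * expNeg)) * ∏ i ∈ univ \ S, substAt i φ := by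
  rw [ch, mul_sum]
  refine sum_congr rfl fun S hS => ?_
  rw [Td, ← prod_sdiff (mem_powersetCard.mp hS).1]
  simp only [substAt_mul, prod_mul_distrib]
  ring

/-- `Td · (Σ_{r=2}^m (−1)^r · r(r−1) · ch_r)
      = Σ_{(j,k), j ≠ k} (∏_{l ∉ {j,k}} X_l) · h(X_j) · h(X_k)`,
where `h = X/(e^X − 1)` is the Bernoulli generating series and the sum on the right runs
over all ordered pairs of distinct indices. -/
theorem td_mul_second_weighted_sum_ch_eq (m : ℕ) (φ : PowerSeries ℚ)
    (hφ : φ * (1 - expNeg) = PowerSeries.X)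
    (h : PowerSeries ℚ) (hh : h * (PowerSeries.exp ℚ - 1) = PowerSeries.X) :
    Td m φ * ∑ r ∈ Finset.Icc 2 m,
        (-1 : MvPowerSeries (Fin m) ℚ) ^ r * (r : MvPowerSeries (Fin m) ℚ) *
          ((r : MvPowerSeries (Fin m) ℚ) - 1) * ch m r
      = ∑ j : Fin m, ∑ k ∈ Finset.univ.erase j,
          (∏ l ∈ (Finset.univ.erase j).erase k, MvPowerSeries.X l) *
            substAt j h * substAt k h := by
  have h_eq := eq_mul_expNeg_of_mul_exp_sub_one_eq_X hφ hh
  have hX (l : Fin m) : substAt l φ - substAt l h = MvPowerSeries.X l := by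
    rw [← substAt_sub, ← substAt_X, h_eq, ← hφ, mul_one_sub]
  calc _ = ∑ r ∈ Icc 2 #(univ : Finset (Fin m)), (-1 : MvPowerSeries (Fin m) ℚ) ^ r * r * (r - 1) *
        (Td m φ * ch m r) := by
        rw [card_univ, Fintype.card_fin, mul_sum]
        exact sum_congr rfl fun r _ => mul_left_comm _ _ _
    _ = _ := by
        simp only [Td_mul_ch, ← h_eq, sum_Icc_neg_one_pow_mul_sum_powersetCard, hX]
end
end
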